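/- arXiv:1604.06302 — 3 statements merged into one kernel-verified Lean document; each statement's English description precedes it below -/
import Mathlib

section
/- Let D = (V, A) be a digraph with V = {v_1, ..., v_n} and let x_1, ..., x_n, y_1, ..., y_n and Δ* be nonnegative integers such that (I) Δ* ≤ n − 1, (II) deg_D^-(v_i) + x_i ≤ Δ* for all i ∈ {1, ..., n}, (III) deg_D^+(v_i) + y_i ≤ Δ* for all i ∈ {1, ..., n}, (IV) the sum of the x_i equals the sum of the y_i, calling this common value s, and (V) s > 2(Δ*)². Then there exists an arc set A' ⊆ (V × V) \ A containing no loops, with |A'| = s, such that in the digraph D' := D + A' every vertex satisfies deg_{D'}(v_i) = (deg_D^-(v_i) + x_i, deg_D^+(v_i) + y_i). -/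
/-!
Arcs are added one at a time, each serving one unit of out-demand at some `u` and one unit of
in-demand at some `v`. When no new arc `u → v` with `u ≠ v` is available, every vertex with
out-demand is an in-neighbour of `v` and every vertex with in-demand an out-neighbour of `u`.
The degree bounds then allow at most `Δ²` for the added arcs leaving the closed in-neighbourhood
of `v` plus the remaining out-demand, and likewise on the other side. As the added arcs plus the
remaining demand exceed `2Δ²`, some added arc `a → b` avoids both neighbourhoods, and trading it
for `a → v` and `u → b` serves one more unit of demand.
-/

def inDeg {V : Type*} [DecidableEq V] (A : Finset (V × V)) (v : V) : ℕ :=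
  (A.filter fun a => a.2 = v).card

def outDeg {V : Type*} [DecidableEq V] (A : Finset (V × V)) (v : V) : ℕ :=
  (A.filter fun a => a.1 = v).card

open Finset

section Degrees

variable {V : Type*} [DecidableEq V] {E F : Finset (V × V)}

@[simp]
lemma inDeg_empty : inDeg (∅ : Finset (V × V)) = 0 := by
  funext v; simp [inDeg]

@[simp]
lemma outDeg_empty : outDeg (∅ : Finset (V × V)) = 0 := by
  funext v; simp [outDeg]

lemma inDeg_insert {a : V × V} (ha : a ∉ E) :
    inDeg (insert a E) = inDeg E + Pi.single a.2 1 := by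
  funext v
  by_cases h : a.2 = v
  · subst h
    simp [inDeg, filter_insert, card_insert_of_notMem (fun h => ha (mem_filter.1 h).1)]
  · simp [inDeg, filter_insert, h, Ne.symm h]

lemma outDeg_insert {a : V × V} (ha : a ∉ E) :
    outDeg (insert a E) = outDeg E + Pi.single a.1 1 := by
  funext v
  by_cases h : a.1 = v
  · subst h
    simp [outDeg, filter_insert, card_insert_of_notMem (fun h => ha (mem_filter.1 h).1)]
  · simp [outDeg, filter_insert, h, Ne.symm h]

lemma inDeg_eq_inDeg_erase_add {a : V × V} (ha : a ∈ E) :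
    inDeg E = inDeg (E.erase a) + Pi.single a.2 1 := by
  rw [← inDeg_insert (notMem_erase a E), insert_erase ha]

lemma outDeg_eq_outDeg_erase_add {a : V × V} (ha : a ∈ E) :
    outDeg E = outDeg (E.erase a) + Pi.single a.1 1 := by
  rw [← outDeg_insert (notMem_erase a E), insert_erase ha]

lemma inDeg_union (h : Disjoint E F) (v : V) : inDeg (E ∪ F) v = inDeg E v + inDeg F v := by
  simp only [inDeg, filter_union]
  exact card_union_of_disjoint (disjoint_filter_filter h)

lemma outDeg_union (h : Disjoint E F) (v : V) : outDeg (E ∪ F) v = outDeg E v + outDeg F v := by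
  simp only [outDeg, filter_union]
  exact card_union_of_disjoint (disjoint_filter_filter h)

lemma sum_inDeg [Fintype V] (E : Finset (V × V)) : ∑ v, inDeg E v = #E :=
  (card_eq_sum_card_fiberwise fun _ _ => mem_univ _).symm

end Degrees

section Neighbourhoods

variable {V : Type*} [DecidableEq V] (E : Finset (V × V))

def closedInNbhd (v : V) : Finset V := insert v ((E.filter (·.2 = v)).image Prod.fst)

def closedOutNbhd (u : V) : Finset V := insert u ((E.filter (·.1 = u)).image Prod.snd)

@[simp]
lemma mem_closedInNbhd {a v : V} : a ∈ closedInNbhd E v ↔ a = v ∨ (a, v) ∈ E := by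
  simp [closedInNbhd]

@[simp]
lemma mem_closedOutNbhd {b u : V} : b ∈ closedOutNbhd E u ↔ b = u ∨ (u, b) ∈ E := by
  simp [closedOutNbhd]

lemma card_closedInNbhd_le (v : V) : #(closedInNbhd E v) ≤ inDeg E v + 1 :=
  (card_insert_le _ _).trans (Nat.add_le_add_right card_image_le 1)

lemma card_closedOutNbhd_le (u : V) : #(closedOutNbhd E u) ≤ outDeg E u + 1 :=
  (card_insert_le _ _).trans (Nat.add_le_add_right card_image_le 1)

end Neighbourhoods

lemma card_filter_mem_add_sum_le {α β : Type*} [DecidableEq β] (f : α → β) (C : Finset α)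
    (K : Finset β) (d : β → ℕ) {Δ : ℕ}
    (h : ∀ b ∈ K, #{a ∈ C | f a = b} + d b ≤ Δ) :
    #{a ∈ C | f a ∈ K} + ∑ b ∈ K, d b ≤ #K * Δ := by
  have hfib : #{a ∈ C | f a ∈ K} = ∑ b ∈ K, #{a ∈ C | f a = b} := by
    rw [card_eq_sum_card_fiberwise (s := {a ∈ C | f a ∈ K}) (t := K)
      fun a ha => (mem_filter.1 ha).2]
    refine sum_congr rfl fun b hb => congrArg card ?_
    ext a
    simp only [mem_filter, and_assoc]
    exact and_congr_right fun _ => ⟨fun h => h.2, fun h => ⟨h ▸ hb, h⟩⟩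
  calc #{a ∈ C | f a ∈ K} + ∑ b ∈ K, d b = ∑ b ∈ K, (#{a ∈ C | f a = b} + d b) := by
        rw [hfib, sum_add_distrib]
    _ ≤ ∑ _b ∈ K, Δ := sum_le_sum h
    _ = #K * Δ := by rw [sum_const, smul_eq_mul]

lemma exists_eq_add_single_of_pos {ι : Type*} [DecidableEq ι] {f : ι → ℕ} {i : ι}
    (h : 0 < f i) :
    ∃ g : ι → ℕ, f = g + Pi.single i 1 := by
  refine ⟨f - Pi.single i 1, (tsub_add_cancel_of_le fun j => ?_).symm⟩
  rcases eq_or_ne j i with rfl | hj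
  · simpa using Nat.succ_le_of_lt h
  · simp [hj]

section Augmentation

variable {V : Type*} [DecidableEq V] {A C : Finset (V × V)} {x y : V → ℕ} {Δ : ℕ}

def IsAugmentation (A C C' : Finset (V × V)) (u v : V) : Prop :=
  Disjoint C' A ∧ (∀ w, (w, w) ∉ C') ∧
    inDeg C' = inDeg C + Pi.single v 1 ∧ outDeg C' = outDeg C + Pi.single u 1

lemma isAugmentation_insert {u v : V} (huv : u ≠ v) (hnew : (u, v) ∉ A ∪ C)
    (hCA : Disjoint C A) (hC : ∀ w, (w, w) ∉ C) : IsAugmentation A C (insert (u, v) C) u v := by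
  have hnewC : (u, v) ∉ C := fun h => hnew (mem_union_right _ h)
  refine ⟨disjoint_insert_left.2 ⟨fun h => hnew (mem_union_left _ h), hCA⟩, fun w hw => ?_,
    inDeg_insert hnewC, outDeg_insert hnewC⟩
  rcases mem_insert.1 hw with h | h
  · simp only [Prod.mk.injEq] at h
    exact huv (h.1.symm.trans h.2)
  · exact hC w h

lemma isAugmentation_exchange {a b u v : V} (hab : (a, b) ∈ C) (hav : (a, v) ∉ A ∪ C)
    (hub : (u, b) ∉ A ∪ C) (ha : a ≠ v) (hb : u ≠ b) (hne : (a, v) ≠ (u, b))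
    (hCA : Disjoint C A) (hC : ∀ w, (w, w) ∉ C) :
    IsAugmentation A C (insert (u, b) (insert (a, v) (C.erase (a, b)))) u v := by
  have hav' : (a, v) ∉ C.erase (a, b) := fun h => hav (mem_union_right _ (mem_of_mem_erase h))
  have hub' : (u, b) ∉ insert (a, v) (C.erase (a, b)) := by
    rw [mem_insert, not_or]
    exact ⟨hne.symm, fun h => hub (mem_union_right _ (mem_of_mem_erase h))⟩
  refine ⟨?_, fun w hw => ?_, ?_, ?_⟩
  · simp only [disjoint_insert_left]
    exact ⟨fun h => hub (mem_union_left _ h), fun h => hav (mem_union_left _ h),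
      hCA.mono_left (erase_subset _ _)⟩
  · simp only [mem_insert, Prod.mk.injEq] at hw
    rcases hw with ⟨rfl, rfl⟩ | ⟨rfl, rfl⟩ | hw
    · exact hb rfl
    · exact ha rfl
    · exact hC w (mem_of_mem_erase hw)
  · rw [inDeg_insert hub', inDeg_insert hav', inDeg_eq_inDeg_erase_add hab, add_right_comm]
  · rw [outDeg_insert hub', outDeg_insert hav', outDeg_eq_outDeg_erase_add hab, add_assoc]

variable [Fintype V]

lemma exists_arc_notMem_closedNbhds
    (hstuck : ∀ u v, 0 < y u → 0 < x v → u ≠ v → (u, v) ∈ A ∪ C) {u v : V}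
    (hu : 0 < y u) (hv : 0 < x v) (hbig : 2 * Δ ^ 2 < #C + ∑ i, x i) (hCA : Disjoint C A)
    (hin : ∀ i, inDeg A i + inDeg C i + x i ≤ Δ)
    (hout : ∀ i, outDeg A i + outDeg C i + y i ≤ Δ) :
    ∃ a b, (a, b) ∈ C ∧ a ∉ closedInNbhd (A ∪ C) v ∧
      b ∉ closedOutNbhd (A ∪ C) u := by
  set Kin := closedInNbhd (A ∪ C) v
  set Kout := closedOutNbhd (A ∪ C) u
  have hKin : #Kin ≤ Δ := by
    have : #Kin ≤ inDeg (A ∪ C) v + 1 := card_closedInNbhd_le _ _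
    have := inDeg_union hCA.symm v
    have := hin v
    omega
  have hKout : #Kout ≤ Δ := by
    have : #Kout ≤ outDeg (A ∪ C) u + 1 := card_closedOutNbhd_le _ _
    have := outDeg_union hCA.symm u
    have := hout u
    omega
  have hbadIn : #{p ∈ C | p.1 ∈ Kin} + ∑ i, y i ≤ Δ * Δ := by
    rw [← sum_subset (subset_univ Kin) fun w _ hw => ?_]
    · refine (card_filter_mem_add_sum_le Prod.fst C Kin y fun b _ => ?_).trans
        (Nat.mul_le_mul_right _ hKin)
      have := hout b
      unfold outDeg at this
      omega
    · rw [mem_closedInNbhd, not_or] at hw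
      exact Nat.eq_zero_of_not_pos fun hw' => hw.2 (hstuck w v hw' hv hw.1)
  have hbadOut : #{p ∈ C | p.2 ∈ Kout} + ∑ i, x i ≤ Δ * Δ := by
    rw [← sum_subset (subset_univ Kout) fun w _ hw => ?_]
    · refine (card_filter_mem_add_sum_le Prod.snd C Kout x fun b _ => ?_).trans
        (Nat.mul_le_mul_right _ hKout)
      have := hin b
      unfold inDeg at this
      omega
    · rw [mem_closedOutNbhd, not_or] at hw
      exact Nat.eq_zero_of_not_pos fun hw' => hw.2 (hstuck u w hu hw' (Ne.symm hw.1))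
  by_contra! hnone
  have hcover : C ⊆ {p ∈ C | p.1 ∈ Kin} ∪ {p ∈ C | p.2 ∈ Kout} := by
    rintro ⟨a, b⟩ hab
    by_cases ha : a ∈ Kin
    · exact mem_union_left _ (mem_filter.2 ⟨hab, ha⟩)
    · exact mem_union_right _ (mem_filter.2 ⟨hab, hnone a b hab ha⟩)
  have := (card_le_card hcover).trans (card_union_le _ _)
  rw [sq] at hbig
  omega

lemma exists_isAugmentation (hx : 0 < ∑ i, x i) (hy : 0 < ∑ i, y i)
    (hbig : 2 * Δ ^ 2 < #C + ∑ i, x i) (hCA : Disjoint C A) (hC : ∀ w, (w, w) ∉ C)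
    (hin : ∀ i, inDeg A i + inDeg C i + x i ≤ Δ)
    (hout : ∀ i, outDeg A i + outDeg C i + y i ≤ Δ) :
    ∃ u v C', 0 < y u ∧ 0 < x v ∧ IsAugmentation A C C' u v := by
  by_cases hgreedy : ∃ u v, 0 < y u ∧ 0 < x v ∧ u ≠ v ∧ (u, v) ∉ A ∪ C
  · obtain ⟨u, v, hu, hv, huv, hnew⟩ := hgreedy
    exact ⟨u, v, _, hu, hv, isAugmentation_insert huv hnew hCA hC⟩
  push Not at hgreedy
  obtain ⟨u, -, hu⟩ := sum_pos_iff.1 hy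
  obtain ⟨v, -, hv⟩ := sum_pos_iff.1 hx
  obtain ⟨a, b, hab, ha, hb⟩ :=
    exists_arc_notMem_closedNbhds hgreedy hu hv hbig hCA hin hout
  rw [mem_closedInNbhd, not_or] at ha
  rw [mem_closedOutNbhd, not_or] at hb
  have hne : (a, v) ≠ (u, b) := by
    intro h
    simp only [Prod.mk.injEq] at h
    obtain ⟨rfl, rfl⟩ := h
    exact ha.2 (hgreedy _ _ hu hv ha.1)
  exact ⟨u, v, _, hu, hv,
    isAugmentation_exchange hab ha.2 hb.2 ha.1 (Ne.symm hb.1) hne hCA hC⟩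

theorem exists_arcs_realizing_demands {k : ℕ} (hx : ∑ i, x i = k) (hy : ∑ i, y i = k)
    (hbig : 2 * Δ ^ 2 < #C + k) (hCA : Disjoint C A) (hC : ∀ w, (w, w) ∉ C)
    (hin : ∀ i, inDeg A i + inDeg C i + x i ≤ Δ)
    (hout : ∀ i, outDeg A i + outDeg C i + y i ≤ Δ) :
    ∃ C', Disjoint C' A ∧ (∀ w, (w, w) ∉ C') ∧
      inDeg C' = inDeg C + x ∧ outDeg C' = outDeg C + y := by
  induction k generalizing C x y with
  | zero =>
    have hx0 : x = 0 := funext fun i => sum_eq_zero_iff.1 hx i (mem_univ i)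
    have hy0 : y = 0 := funext fun i => sum_eq_zero_iff.1 hy i (mem_univ i)
    exact ⟨C, hCA, hC, by rw [hx0, add_zero], by rw [hy0, add_zero]⟩
  | succ k ih =>
    obtain ⟨u, v, C', hu, hv, hC'A, hC', hC'in, hC'out⟩ :=
      exists_isAugmentation (by omega) (by omega) (hx ▸ hbig) hCA hC hin hout
    obtain ⟨x', rfl⟩ := exists_eq_add_single_of_pos hv
    obtain ⟨y', rfl⟩ := exists_eq_add_single_of_pos hu
    have hin' : inDeg C' + x' = inDeg C + (x' + Pi.single v 1) := by
      rw [hC'in, add_right_comm, add_assoc]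
    have hout' : outDeg C' + y' = outDeg C + (y' + Pi.single u 1) := by
      rw [hC'out, add_right_comm, add_assoc]
    have hcard : #C' = #C + 1 := by
      simp only [← sum_inDeg, hC'in, Pi.add_apply, sum_add_distrib, sum_pi_single', mem_univ,
        if_true]
    simp only [Pi.add_apply, sum_add_distrib, sum_pi_single', mem_univ, if_true] at hx hy
    have hinC' : ∀ i, inDeg A i + inDeg C' i + x' i ≤ Δ := fun i => by
      have h := congrFun hin' i
      have := hin i
      simp only [Pi.add_apply] at h this
      omega
    have houtC' : ∀ i, outDeg A i + outDeg C' i + y' i ≤ Δ := fun i => by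
      have h := congrFun hout' i
      have := hout i
      simp only [Pi.add_apply] at h this
      omega
    obtain ⟨C'', hC''A, hC'', hC''in, hC''out⟩ :=
      ih (by omega) (by omega) (by omega) hC'A hC' hinC' houtC'
    exact ⟨C'', hC''A, hC'', hC''in.trans hin', hC''out.trans hout'⟩

end Augmentation

theorem flow_realization_general (n : ℕ) (A : Finset (Fin n × Fin n))
    (x y : Fin n → ℕ) (Δ s : ℕ)
    (hII : ∀ i : Fin n, inDeg A i + x i ≤ Δ)
    (hIII : ∀ i : Fin n, outDeg A i + y i ≤ Δ)
    (hIVx : ∑ i, x i = s) (hIVy : ∑ i, y i = s)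
    (hV : s > 2 * Δ ^ 2) :
    ∃ A' : Finset (Fin n × Fin n),
      (∀ a ∈ A', a ∉ A) ∧
      (∀ v : Fin n, (v, v) ∉ A') ∧
      A'.card = s ∧
      (∀ i : Fin n,
        inDeg (A ∪ A') i = inDeg A i + x i ∧
        outDeg (A ∪ A') i = outDeg A i + y i) := by
  obtain ⟨A', hdisj, hloop, hin, hout⟩ :=
    exists_arcs_realizing_demands (C := ∅) hIVx hIVy (by simpa using hV) (disjoint_empty_left A)
      (by simp) (by simpa using hII) (by simpa using hIII)
  rw [inDeg_empty, zero_add] at hin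
  rw [outDeg_empty, zero_add] at hout
  refine ⟨A', disjoint_left.1 hdisj, hloop, by rw [← sum_inDeg, hin, hIVx],
    fun i => ⟨?_, ?_⟩⟩
  · rw [inDeg_union hdisj.symm, hin]
  · rw [outDeg_union hdisj.symm, hout]

/-- **Flow-based realization lemma.** Given a loopless digraph on `Fin n` and demands
`x i` (indegree increases) and `y i` (outdegree increases) satisfying conditions
(I)–(V), there is a loopless arc set `A'` disjoint from `A` of size exactly `s`
realizing all demands. -/
theorem flow_realization (n : ℕ) (A : Finset (Fin n × Fin n))
    (hA : ∀ v : Fin n, (v, v) ∉ A)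
    (x y : Fin n → ℕ) (Δ s : ℕ)
    (hI : Δ ≤ n - 1)
    (hII : ∀ i : Fin n, inDeg A i + x i ≤ Δ)
    (hIII : ∀ i : Fin n, outDeg A i + y i ≤ Δ)
    (hIVx : ∑ i, x i = s) (hIVy : ∑ i, y i = s)
    (hV : s > 2 * Δ ^ 2) :
    ∃ A' : Finset (Fin n × Fin n),
      (∀ a ∈ A', a ∉ A) ∧
      (∀ v : Fin n, (v, v) ∉ A') ∧
      A'.card = s ∧
      (∀ i : Fin n,
        inDeg (A ∪ A') i = inDeg A i + x i ∧
        outDeg (A ∪ A') i = outDeg A i + y i) :=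
  flow_realization_general n A x y Δ s hII hIII hIVx hIVy hV
end

section
/- Let D = (V, A) be a digraph, let s be a nonnegative integer, let Π be a sequence property, and let C ⊆ V be a 2s(Δ_D + 1)-block set for D. If there exists a loopless arc set A' ⊆ (V × V) \ A with |A'| ≤ s such that σ(D + A') fulfills Π, then there exists a loopless arc set A* ⊆ (C × C) \ A with |A*| ≤ s such that σ(D + A*) fulfills Π. -/
/-- Degree pair (indegree, outdegree) of vertex `v`. -/
def deg {V : Type*} [DecidableEq V] (A : Finset (V × V)) (v : V) : ℕ × ℕ :=
  (inDeg A v, outDeg A v)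

/-- Degree sequence of the digraph with arc set `A`. -/
def degSeq {V : Type*} [Fintype V] [DecidableEq V] (A : Finset (V × V)) :
    Multiset (ℕ × ℕ) :=
  Finset.univ.val.map (deg A)

/-- Maximum in- or outdegree in the digraph with arc set `A`. -/
def maxDeg {V : Type*} [Fintype V] [DecidableEq V] (A : Finset (V × V)) : ℕ :=
  Finset.univ.sup fun v => max (inDeg A v) (outDeg A v)

/-- The block `B_D(d)`: all vertices with degree pair `d`. -/
def block {V : Type*} [Fintype V] [DecidableEq V]
    (A : Finset (V × V)) (d : ℕ × ℕ) : Finset V :=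
  Finset.univ.filter fun v => deg A v = d

/-- `C` is an `α`-block set for `D`: for each degree `d` occurring in `σ(D)`,
`C` contains exactly `min |B_D(d)| α` vertices with degree `d`. -/
def IsBlockSet {V : Type*} [Fintype V] [DecidableEq V]
    (A : Finset (V × V)) (α : ℕ) (C : Finset V) : Prop :=
  ∀ d : ℕ × ℕ, (∃ v : V, deg A v = d) →
    (block A d ∩ C).card = min (block A d).card α

/-!
Induct on the number of endpoints of the new arcs that lie outside `C`. If `v` is such an
endpoint, then `v ∉ C` forces the block of `deg_D(v)` to meet `C` in exactly `2s(Δ_D + 1)`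
vertices. At most `2s - 1` of them are other endpoints of new arcs, and at most `2sΔ_D` of them
are `D`-neighbours of an endpoint through which moving a new arc could create an arc of `D`.
So some vertex `u` of the block inside `C` is neither; exchanging `v` and `u` relabels the new
arcs into an admissible arc set with one fewer endpoint outside `C`, and keeps the degree
sequence because `u` and `v` have the same degree in `D`.
-/

section

open Finset

variable {V : Type*}

def relabel (τ : Equiv.Perm V) (B : Finset (V × V)) : Finset (V × V) :=
  B.map (τ.prodCongr τ).toEmbedding

lemma mem_relabel {τ : Equiv.Perm V} {B : Finset (V × V)} {a : V × V} :
    a ∈ relabel τ B ↔ ∃ b ∈ B, (τ b.1, τ b.2) = a := by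
  simp only [relabel, mem_map, Equiv.coe_toEmbedding, Equiv.prodCongr_apply, Prod.map]

structure IsArcAddition (A : Finset (V × V)) (s : ℕ) (B : Finset (V × V)) : Prop where
  notMem : ∀ a ∈ B, a ∉ A
  loopless : ∀ v : V, (v, v) ∉ B
  card_le : B.card ≤ s

lemma IsArcAddition.disjoint {A B : Finset (V × V)} {s : ℕ} (hB : IsArcAddition A s B) :
    Disjoint A B :=
  disjoint_right.mpr hB.notMem

section DecidableEq

variable [DecidableEq V]

lemma deg_union {A B : Finset (V × V)} (h : Disjoint A B) (v : V) :
    deg (A ∪ B) v = deg A v + deg B v := by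
  simp only [deg, inDeg, outDeg, Prod.mk_add_mk, filter_union]
  rw [card_union_of_disjoint (h.mono (filter_subset _ _) (filter_subset _ _)),
    card_union_of_disjoint (h.mono (filter_subset _ _) (filter_subset _ _))]

lemma deg_swap_apply {A : Finset (V × V)} {u v : V} (h : deg A u = deg A v) (x : V) :
    deg A (Equiv.swap u v x) = deg A x := by
  rcases eq_or_ne x u with rfl | hu
  · rw [Equiv.swap_apply_left, h]
  rcases eq_or_ne x v with rfl | hv
  · rw [Equiv.swap_apply_right, h]
  · rw [Equiv.swap_apply_of_ne_of_ne hu hv]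

lemma deg_relabel_apply (τ : Equiv.Perm V) (B : Finset (V × V)) (x : V) :
    deg (relabel τ B) (τ x) = deg B x := by
  simp only [deg, inDeg, outDeg, relabel, filter_map, card_map]
  congr 2 <;> ext a <;> simp

def endpoints (B : Finset (V × V)) : Finset V :=
  B.image Prod.fst ∪ B.image Prod.snd

lemma fst_mem_endpoints {B : Finset (V × V)} {a : V × V} (ha : a ∈ B) : a.1 ∈ endpoints B :=
  mem_union_left _ (mem_image_of_mem _ ha)

lemma snd_mem_endpoints {B : Finset (V × V)} {a : V × V} (ha : a ∈ B) : a.2 ∈ endpoints B :=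
  mem_union_right _ (mem_image_of_mem _ ha)

lemma card_endpoints_le (B : Finset (V × V)) : (endpoints B).card ≤ 2 * B.card := by
  have h₁ : (B.image Prod.fst).card ≤ B.card := card_image_le
  have h₂ : (B.image Prod.snd).card ≤ B.card := card_image_le
  have := card_union_le (B.image Prod.fst) (B.image Prod.snd)
  rw [endpoints]
  omega

lemma subset_product_of_endpoints_subset {B : Finset (V × V)} {C : Finset V}
    (h : endpoints B ⊆ C) : B ⊆ C ×ˢ C :=
  fun _ ha => mem_product.mpr ⟨h (fst_mem_endpoints ha), h (snd_mem_endpoints ha)⟩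

lemma endpoints_relabel (τ : Equiv.Perm V) (B : Finset (V × V)) :
    endpoints (relabel τ B) = (endpoints B).image τ := by
  simp only [endpoints, relabel, map_eq_image, image_image, image_union]
  rfl

lemma card_endpoints_relabel_swap_sdiff_lt {B : Finset (V × V)} {C : Finset V} {u v : V}
    (hv : v ∈ endpoints B) (hvC : v ∉ C) (hu : u ∉ endpoints B) (huC : u ∈ C) :
    (endpoints (relabel (Equiv.swap v u) B) \ C).card < (endpoints B \ C).card := by
  refine (card_le_card fun x hx => ?_).trans_lt (card_erase_lt_of_mem (mem_sdiff.mpr ⟨hv, hvC⟩))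
  rw [endpoints_relabel, mem_sdiff, mem_image] at hx
  obtain ⟨⟨y, hy, rfl⟩, hyC⟩ := hx
  have hyu : y ≠ u := fun h => hu (h ▸ hy)
  have hyv : y ≠ v := by
    rintro rfl
    exact hyC (by rwa [Equiv.swap_apply_left])
  rw [Equiv.swap_apply_of_ne_of_ne hyv hyu] at hyC ⊢
  exact mem_erase.mpr ⟨hyv, mem_sdiff.mpr ⟨hy, hyC⟩⟩

/-- Moving an endpoint of an arc of `B` to a vertex outside this set never creates an arc
of `A`. -/
def conflictSet (A B : Finset (V × V)) : Finset V :=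
  B.biUnion fun b =>
    (A.filter (·.2 = b.2)).image Prod.fst ∪ (A.filter (·.1 = b.1)).image Prod.snd

lemma isArcAddition_relabel_swap {A B : Finset (V × V)} {s : ℕ} (hB : IsArcAddition A s B)
    {u v : V} (hu : u ∉ endpoints B) (hconf : u ∉ conflictSet A B) :
    IsArcAddition A s (relabel (Equiv.swap v u) B) := by
  refine ⟨?_, fun w hw => ?_, (card_map _).trans_le hB.card_le⟩
  · intro a ha
    obtain ⟨⟨x, y⟩, hb, rfl⟩ := mem_relabel.mp ha
    have hxu : x ≠ u := fun h => hu (h ▸ fst_mem_endpoints hb)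
    have hyu : y ≠ u := fun h => hu (h ▸ snd_mem_endpoints hb)
    rcases eq_or_ne x v with hxv | hxv <;> rcases eq_or_ne y v with hyv | hyv
    · exact absurd (by rwa [hxv, hyv] at hb) (hB.loopless v)
    · rw [hxv, Equiv.swap_apply_left, Equiv.swap_apply_of_ne_of_ne hyv hyu]
      exact fun hA => hconf (mem_biUnion.mpr ⟨_, hb, mem_union_left _
        (mem_image.mpr ⟨(u, y), mem_filter.mpr ⟨hA, rfl⟩, rfl⟩)⟩)
    · rw [hyv, Equiv.swap_apply_left, Equiv.swap_apply_of_ne_of_ne hxv hxu]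
      exact fun hA => hconf (mem_biUnion.mpr ⟨_, hb, mem_union_right _
        (mem_image.mpr ⟨(x, u), mem_filter.mpr ⟨hA, rfl⟩, rfl⟩)⟩)
    · rw [Equiv.swap_apply_of_ne_of_ne hxv hxu, Equiv.swap_apply_of_ne_of_ne hyv hyu]
      exact hB.notMem _ hb
  · obtain ⟨b, hb, hbw⟩ := mem_relabel.mp hw
    obtain ⟨h₁, h₂⟩ := Prod.ext_iff.mp hbw
    have : b = (b.1, b.1) := Prod.ext rfl ((Equiv.injective _) (h₂.trans h₁.symm))
    exact hB.loopless b.1 (this ▸ hb)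

section Fintype

variable [Fintype V]

lemma inDeg_le_maxDeg (A : Finset (V × V)) (v : V) : inDeg A v ≤ maxDeg A :=
  (le_max_left _ _).trans (le_sup (f := fun w => max (inDeg A w) (outDeg A w)) (mem_univ v))

lemma outDeg_le_maxDeg (A : Finset (V × V)) (v : V) : outDeg A v ≤ maxDeg A :=
  (le_max_right _ _).trans (le_sup (f := fun w => max (inDeg A w) (outDeg A w)) (mem_univ v))

lemma card_conflictSet_le (A B : Finset (V × V)) :
    (conflictSet A B).card ≤ B.card * (2 * maxDeg A) := by
  refine card_biUnion_le_card_mul _ _ _ fun b _ => (card_union_le _ _).trans ?_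
  have h₁ := (card_image_le (s := A.filter (·.2 = b.2)) (f := Prod.fst)).trans
    (inDeg_le_maxDeg A b.2)
  have h₂ := (card_image_le (s := A.filter (·.1 = b.1)) (f := Prod.snd)).trans
    (outDeg_le_maxDeg A b.1)
  omega

lemma degSeq_eq_of_deg_perm {A B : Finset (V × V)} (τ : Equiv.Perm V)
    (h : ∀ x, deg B (τ x) = deg A x) : degSeq B = degSeq A := by
  rw [degSeq, ← congrArg Finset.val (map_univ_equiv τ), map_val, Multiset.map_map]
  exact Multiset.map_congr rfl fun x _ => h x

lemma degSeq_union_relabel {A B : Finset (V × V)} (τ : Equiv.Perm V)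
    (hτ : ∀ x, deg A (τ x) = deg A x) (hB : Disjoint A B) (hτB : Disjoint A (relabel τ B)) :
    degSeq (A ∪ relabel τ B) = degSeq (A ∪ B) :=
  degSeq_eq_of_deg_perm τ fun x => by rw [deg_union hτB, deg_union hB, hτ, deg_relabel_apply]

lemma card_block_inter_of_notMem {A : Finset (V × V)} {α : ℕ} {C : Finset V}
    (hC : IsBlockSet A α C) {v : V} (hv : v ∉ C) : (block A (deg A v) ∩ C).card = α := by
  have hvb : v ∈ block A (deg A v) := by simp [block]
  have h := hC _ ⟨v, rfl⟩
  refine h.trans (min_eq_right (not_lt.mp fun hlt => hv ?_))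
  rw [min_eq_left hlt.le] at h
  exact (mem_inter.mp ((eq_of_subset_of_card_le inter_subset_left h.ge).symm ▸ hvb)).2

lemma exists_isArcAddition_card_endpoints_sdiff_lt {A B : Finset (V × V)} {s : ℕ}
    {C : Finset V} (hC : IsBlockSet A (2 * s * (maxDeg A + 1)) C) (hB : IsArcAddition A s B)
    {v : V} (hv : v ∈ endpoints B) (hvC : v ∉ C) :
    ∃ B', IsArcAddition A s B' ∧ degSeq (A ∪ B') = degSeq (A ∪ B) ∧
      (endpoints B' \ C).card < (endpoints B \ C).card := by
  obtain ⟨u, hu⟩ :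
      ((block A (deg A v) ∩ C) \ ((endpoints B).erase v ∪ conflictSet A B)).Nonempty := by
    rw [← card_pos]
    have h_block := card_block_inter_of_notMem hC hvC
    have h_erase := card_erase_of_mem hv
    have h_pos := card_pos.mpr ⟨v, hv⟩
    have h_end := card_endpoints_le B
    have h_conf := (card_conflictSet_le A B).trans (Nat.mul_le_mul_right _ hB.card_le)
    have h_union := card_union_le ((endpoints B).erase v) (conflictSet A B)
    have h_sdiff := le_card_sdiff ((endpoints B).erase v ∪ conflictSet A B)
      (block A (deg A v) ∩ C)
    have h_ring : 2 * s * (maxDeg A + 1) = s * (2 * maxDeg A) + 2 * s := by ring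
    have h_card := hB.card_le
    omega
  simp only [mem_sdiff, mem_inter, mem_union, mem_erase, block, mem_filter] at hu
  obtain ⟨⟨⟨-, hdeg⟩, huC⟩, hu'⟩ := hu
  have hue : u ∉ endpoints B := fun h => hu' (Or.inl ⟨ne_of_mem_of_not_mem huC hvC, h⟩)
  have hB' := isArcAddition_relabel_swap (v := v) hB hue fun h => hu' (Or.inr h)
  exact ⟨_, hB', degSeq_union_relabel _ (deg_swap_apply hdeg.symm) hB.disjoint hB'.disjoint,
    card_endpoints_relabel_swap_sdiff_lt hv hvC hue huC⟩

lemma exists_isArcAddition_endpoints_subset {A B : Finset (V × V)} {s : ℕ} {C : Finset V}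
    (hC : IsBlockSet A (2 * s * (maxDeg A + 1)) C) (hB : IsArcAddition A s B) :
    ∃ B', IsArcAddition A s B' ∧ endpoints B' ⊆ C ∧
      degSeq (A ∪ B') = degSeq (A ∪ B) := by
  induction h : (endpoints B \ C).card using Nat.strong_induction_on generalizing B with
  | _ n ih =>
    by_cases hsub : endpoints B ⊆ C
    · exact ⟨B, hB, hsub, rfl⟩
    obtain ⟨v, hv, hvC⟩ := not_subset.mp hsub
    obtain ⟨B', hB', hseq, hlt⟩ := exists_isArcAddition_card_endpoints_sdiff_lt hC hB hv hvC
    obtain ⟨B'', hB'', hsub'', hseq''⟩ := ih _ (h ▸ hlt) hB' rfl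
    exact ⟨B'', hB'', hsub'', hseq''.trans hseq⟩

end Fintype

end DecidableEq

end

theorem solution_in_block_set_general {V : Type*} [Fintype V] [DecidableEq V]
    (A : Finset (V × V))
    (s : ℕ) (Prp : Multiset (ℕ × ℕ) → Prop)
    (C : Finset V)
    (hC : IsBlockSet A (2 * s * (maxDeg A + 1)) C)
    (hex : ∃ A' : Finset (V × V),
      (∀ a ∈ A', a ∉ A) ∧ (∀ v : V, (v, v) ∉ A') ∧ A'.card ≤ s ∧
      Prp (degSeq (A ∪ A'))) :
    ∃ A'' : Finset (V × V),
      A'' ⊆ C ×ˢ C ∧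
      (∀ a ∈ A'', a ∉ A) ∧ (∀ v : V, (v, v) ∉ A'') ∧ A''.card ≤ s ∧
      Prp (degSeq (A ∪ A'')) := by
  obtain ⟨A', hA'A, hA'loop, hA'card, hPrp⟩ := hex
  obtain ⟨A'', ⟨hA''A, hA''loop, hA''card⟩, hsub, hseq⟩ :=
    exists_isArcAddition_endpoints_subset hC ⟨hA'A, hA'loop, hA'card⟩
  exact ⟨A'', subset_product_of_endpoints_subset hsub, hA''A, hA''loop, hA''card, hseq ▸ hPrp⟩

/-- **Solutions inside a `2s(Δ_D+1)`-block set.** If a digraph degree sequence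
completion instance (with no vertex degree constraints) has a solution, then it
has one all of whose arcs lie inside a given `2s(Δ_D+1)`-block set `C`. -/
theorem solution_in_block_set {V : Type*} [Fintype V] [DecidableEq V]
    (A : Finset (V × V)) (hA : ∀ v : V, (v, v) ∉ A)
    (s : ℕ) (Prp : Multiset (ℕ × ℕ) → Prop)
    (C : Finset V)
    (hC : IsBlockSet A (2 * s * (maxDeg A + 1)) C)
    (hex : ∃ A' : Finset (V × V),
      (∀ a ∈ A', a ∉ A) ∧ (∀ v : V, (v, v) ∉ A') ∧ A'.card ≤ s ∧
      Prp (degSeq (A ∪ A'))) :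
    ∃ A'' : Finset (V × V),
      A'' ⊆ C ×ˢ C ∧
      (∀ a ∈ A'', a ∉ A) ∧ (∀ v : V, (v, v) ∉ A'') ∧ A''.card ≤ s ∧
      Prp (degSeq (A ∪ A'')) :=
  solution_in_block_set_general A s Prp C hC hex
end

section
/- Let a_1, ..., a_n be positive integers with a_i < B for all i and Σ_{i=1}^n a_i = 2B. Consider the sequence σ of 5n nonnegative integer pairs consisting, for each i ∈ {1, ..., n}, of one pair (2B(i+1) − a_i, 0), two pairs (2B(i+1), 0), and two pairs (2B(i+1) − a_i, a_i). Then the following are equivalent: (1) there exists an index set I ⊆ {1, ..., n} with Σ_{i∈I} a_i = B; (2) there exists a sequence σ' of 5n pairs, indexed compatibly with σ, such that each pair of σ' componentwise dominates the corresponding pair of σ, the total increase over all first components equals B, the total increase over all second components equals B, and every pair occurring in the multiset σ' occurs at least 2 times. -/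
/-!
Write `M i = 2B(i+2)`. Given `I`, raise the pair `(M i - a i, 0)` of block `i` to a copy of
`(M i - a i, a i)` when `i ∈ I` and to a copy of `(M i, 0)` otherwise: this costs `a i` in the
second, resp. first, coordinate, `B` in each in total, and every block then consists of pairs
occurring twice.

Conversely, a raise by at most `B` keeps the first coordinates of block `i` within
`[M i - a i, M i + B]`; since `a i < B` these intervals are disjoint, so the first pair of block
`i` must be matched inside its block, which costs at least `a i` in one coordinate. As the total
budget is `2B = ∑ a i`, the indices where the second coordinate pays form a solution.
-/

/-- The sequence of `5n` pairs constructed from a Partition instance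
`a : Fin n → ℕ` with target `B`:  for each `i` (representing `a_{i+1}`,
hence with multiplier `2B(i+2)`), one pair `(2B(i+2) - a i, 0)` (at `j = 0`),
two pairs `(2B(i+2), 0)` (at `j = 1, 2`), and two pairs
`(2B(i+2) - a i, a i)` (at `j = 3, 4`). -/
def partitionSeq (n B : ℕ) (a : Fin n → ℕ) (p : Fin n × Fin 5) : ℕ × ℕ :=
  if p.2.val = 0 then (2 * B * (p.1.val + 2) - a p.1, 0)
  else if p.2.val = 1 ∨ p.2.val = 2 then (2 * B * (p.1.val + 2), 0)
  else (2 * B * (p.1.val + 2) - a p.1, a p.1)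

open Finset

theorem two_le_card_filter_eq_iff_exists_ne {α β : Type*} [Fintype α] [DecidableEq β]
    (f : α → β) (p : α) : 2 ≤ #{q | f q = f p} ↔ ∃ q ≠ p, f q = f p := by
  constructor
  · intro h
    obtain ⟨q, hq, hne⟩ := exists_mem_ne h p
    exact ⟨q, hne, (mem_filter.mp hq).2⟩
  · rintro ⟨q, hne, hq⟩
    exact one_lt_card.mpr ⟨q, by simpa using hq, p, by simp, hne⟩

theorem exists_sum_eq_of_le_or_le {ι : Type*} [Fintype ι] {a f g : ι → ℕ} {b c : ℕ}
    (h : ∀ i, a i ≤ f i ∨ a i ≤ g i) (hf : ∑ i, f i ≤ b) (hg : ∑ i, g i ≤ c)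
    (ha : ∑ i, a i = b + c) : ∃ I : Finset ι, ∑ i ∈ I, a i = c := by
  classical
  have hsplit := sum_filter_add_sum_filter_not univ (fun i => a i ≤ g i) a
  set s := univ.filter fun i => a i ≤ g i
  have hs : ∑ i ∈ s, a i ≤ c := calc
    _ ≤ ∑ i ∈ s, g i := sum_le_sum fun i hi => (mem_filter.mp hi).2
    _ ≤ ∑ i, g i := sum_le_sum_of_subset (subset_univ s)
    _ ≤ c := hg
  have hrest : ∑ i ∈ univ.filter fun i => ¬a i ≤ g i, a i ≤ b := calc
    _ ≤ ∑ i ∈ univ.filter fun i => ¬a i ≤ g i, f i :=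
        sum_le_sum fun i hi => (h i).resolve_right (mem_filter.mp hi).2
    _ ≤ ∑ i, f i := sum_le_sum_of_subset (subset_univ _)
    _ ≤ b := hf
  exact ⟨s, by omega⟩

theorem sum_slice_le_sum {α β : Type*} [Fintype α] [Fintype β] (f : α × β → ℕ) (b : β) :
    ∑ i, f (i, b) ≤ ∑ p, f p := by
  rw [Fintype.sum_prod_type]
  exact sum_le_sum fun i _ => single_le_sum (fun j _ => Nat.zero_le (f (i, j))) (mem_univ b)

theorem sum_eq_sum_slice {α β M : Type*} [Fintype α] [Fintype β] [AddCommMonoid M]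
    {f : α × β → M} (b : β) (hf : ∀ p, p.2 ≠ b → f p = 0) :
    ∑ p, f p = ∑ i, f (i, b) := by
  rw [Fintype.sum_prod_type]
  exact sum_congr rfl fun i _ => Fintype.sum_eq_single b fun j hj => hf (i, j) hj

section
variable {n B : ℕ} {a : Fin n → ℕ}

@[simp] theorem partitionSeq_zero (i : Fin n) :
    partitionSeq n B a (i, 0) = (2 * B * (i + 2) - a i, 0) := rfl
@[simp] theorem partitionSeq_one (i : Fin n) :
    partitionSeq n B a (i, 1) = (2 * B * (i + 2), 0) := rfl
@[simp] theorem partitionSeq_two (i : Fin n) :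
    partitionSeq n B a (i, 2) = (2 * B * (i + 2), 0) := rfl
@[simp] theorem partitionSeq_three (i : Fin n) :
    partitionSeq n B a (i, 3) = (2 * B * (i + 2) - a i, a i) := rfl
@[simp] theorem partitionSeq_four (i : Fin n) :
    partitionSeq n B a (i, 4) = (2 * B * (i + 2) - a i, a i) := rfl

theorem partitionSeq_fst_le (p : Fin n × Fin 5) :
    (partitionSeq n B a p).1 ≤ 2 * B * (p.1 + 2) := by
  unfold partitionSeq; split_ifs <;> simp

theorem sub_le_partitionSeq_fst (p : Fin n × Fin 5) :
    2 * B * (p.1 + 2) - a p.1 ≤ (partitionSeq n B a p).1 := by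
  unfold partitionSeq; split_ifs <;> simp

theorem le_two_mul_mul_add_two (ha : ∀ i, a i ≤ B) (i : Fin n) : a i ≤ 2 * B * (i + 2) := by
  nlinarith [ha i]

variable {τ : Fin n × Fin 5 → ℕ × ℕ}

theorem fst_lt_fst_of_lt (hlt : ∀ i, a i < B) (hdom : ∀ p, partitionSeq n B a p ≤ τ p)
    (hB : ∀ p, (τ p).1 ≤ (partitionSeq n B a p).1 + B) {p q : Fin n × Fin 5}
    (h : p.1 < q.1) : (τ p).1 < (τ q).1 := by
  have hM : 2 * B * (p.1 + 2) + 2 * B ≤ 2 * B * (q.1 + 2) := by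
    have : (p.1 : ℕ) + 3 ≤ q.1 + 2 := by omega
    nlinarith
  have := hB p
  have := (hdom q).1
  have := partitionSeq_fst_le (B := B) (a := a) p
  have := sub_le_partitionSeq_fst (B := B) (a := a) q
  have := hlt q.1
  omega

theorem fst_eq_of_fst_eq (hlt : ∀ i, a i < B) (hdom : ∀ p, partitionSeq n B a p ≤ τ p)
    (hB : ∀ p, (τ p).1 ≤ (partitionSeq n B a p).1 + B) {p q : Fin n × Fin 5}
    (h : (τ p).1 = (τ q).1) : p.1 = q.1 := by
  by_contra hne
  rcases lt_or_gt_of_ne hne with hpq | hqp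
  · exact (fst_lt_fst_of_lt hlt hdom hB hpq).ne h
  · exact (fst_lt_fst_of_lt hlt hdom hB hqp).ne' h

theorem le_or_le_of_exists_ne_eq (hlt : ∀ i, a i < B)
    (hdom : ∀ p, partitionSeq n B a p ≤ τ p)
    (hB : ∀ p, (τ p).1 ≤ (partitionSeq n B a p).1 + B) {i : Fin n}
    (h : ∃ q ≠ (i, 0), τ q = τ (i, 0)) :
    a i ≤ (τ (i, 0)).1 - (partitionSeq n B a (i, 0)).1 ∨
      a i ≤ (τ (i, 0)).2 - (partitionSeq n B a (i, 0)).2 := by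
  obtain ⟨⟨i', j⟩, hne, heq⟩ := h
  obtain rfl : i' = i := fst_eq_of_fst_eq hlt hdom hB (congrArg Prod.fst heq)
  have hai := le_two_mul_mul_add_two (fun i => (hlt i).le) i'
  have hj := hdom (i', j)
  rw [Prod.le_def] at hj
  rw [Prod.ext_iff] at heq
  fin_cases j <;> simp at hne hj heq ⊢ <;> omega

end

def partitionRaise (n B : ℕ) (a : Fin n → ℕ) (I : Finset (Fin n)) (p : Fin n × Fin 5) :
    ℕ × ℕ :=
  partitionSeq n B a (p.1, if p.2 = 0 then (if p.1 ∈ I then 3 else 1) else p.2)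

section
variable {n B : ℕ} {a : Fin n → ℕ} (I : Finset (Fin n))

theorem partitionSeq_le_partitionRaise (p : Fin n × Fin 5) :
    partitionSeq n B a p ≤ partitionRaise n B a I p := by
  obtain ⟨i, j⟩ := p
  by_cases hj : j = 0
  · subst hj
    by_cases hi : i ∈ I <;> simp [partitionRaise, hi, Prod.le_def]
  · simp [partitionRaise, hj]

theorem sum_partitionRaise_fst_sub (ha : ∀ i, a i ≤ B) :
    ∑ p, ((partitionRaise n B a I p).1 - (partitionSeq n B a p).1) = ∑ i ∈ Iᶜ, a i := by
  rw [sum_eq_sum_slice 0 fun p hp => by simp [partitionRaise, hp], ← Fintype.sum_ite_mem Iᶜ a]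
  refine sum_congr rfl fun i _ => ?_
  have := le_two_mul_mul_add_two ha i
  by_cases hi : i ∈ I
  · simp [partitionRaise, hi]
  · simp [partitionRaise, hi]
    omega

theorem sum_partitionRaise_snd_sub :
    ∑ p, ((partitionRaise n B a I p).2 - (partitionSeq n B a p).2) = ∑ i ∈ I, a i := by
  rw [sum_eq_sum_slice 0 fun p hp => by simp [partitionRaise, hp], ← Fintype.sum_ite_mem I a]
  refine sum_congr rfl fun i _ => ?_
  by_cases hi : i ∈ I <;> simp [partitionRaise, hi]

theorem partitionRaise_exists_ne_eq (p : Fin n × Fin 5) :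
    ∃ q ≠ p, partitionRaise n B a I q = partitionRaise n B a I p := by
  obtain ⟨i, j⟩ := p
  by_cases hi : i ∈ I
  · fin_cases j
    exacts [⟨(i, 3), by simp, by simp [partitionRaise, hi]⟩, ⟨(i, 2), by simp, rfl⟩,
      ⟨(i, 1), by simp, rfl⟩, ⟨(i, 4), by simp, rfl⟩, ⟨(i, 3), by simp, rfl⟩]
  · fin_cases j
    exacts [⟨(i, 1), by simp, by simp [partitionRaise, hi]⟩, ⟨(i, 2), by simp, rfl⟩,
      ⟨(i, 1), by simp, rfl⟩, ⟨(i, 4), by simp, rfl⟩, ⟨(i, 3), by simp, rfl⟩]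

end

theorem partition_reduction_general (n B : ℕ) (a : Fin n → ℕ)
    (hlt : ∀ i, a i < B) (hsum : ∑ i, a i = 2 * B) :
    (∃ I : Finset (Fin n), ∑ i ∈ I, a i = B) ↔
    (∃ σ' : Fin n × Fin 5 → ℕ × ℕ,
      (∀ p : Fin n × Fin 5,
        (partitionSeq n B a p).1 ≤ (σ' p).1 ∧ (partitionSeq n B a p).2 ≤ (σ' p).2) ∧
      (∑ p : Fin n × Fin 5, ((σ' p).1 - (partitionSeq n B a p).1)) = B ∧
      (∑ p : Fin n × Fin 5, ((σ' p).2 - (partitionSeq n B a p).2)) = B ∧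
      (∀ p : Fin n × Fin 5,
        2 ≤ (Finset.univ.filter fun q : Fin n × Fin 5 => σ' q = σ' p).card)) := by
  constructor
  · rintro ⟨I, hI⟩
    have hIc : ∑ i ∈ Iᶜ, a i = B := by
      have := sum_compl_add_sum I a
      omega
    refine ⟨partitionRaise n B a I, partitionSeq_le_partitionRaise I, ?_, ?_, fun p =>
      (two_le_card_filter_eq_iff_exists_ne _ p).mpr (partitionRaise_exists_ne_eq I p)⟩
    · rw [sum_partitionRaise_fst_sub I fun i => (hlt i).le, hIc]
    · rw [sum_partitionRaise_snd_sub I, hI]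
  · rintro ⟨σ', hdom, h1, h2, hanon⟩
    have hB : ∀ p, (σ' p).1 ≤ (partitionSeq n B a p).1 + B := fun p => by
      have := single_le_sum (fun q _ => Nat.zero_le _) (mem_univ p)
        (f := fun q => (σ' q).1 - (partitionSeq n B a q).1)
      have := (hdom p).1
      omega
    refine exists_sum_eq_of_le_or_le
      (fun i => le_or_le_of_exists_ne_eq hlt hdom hB
        ((two_le_card_filter_eq_iff_exists_ne σ' (i, 0)).mp (hanon (i, 0))))
      ((sum_slice_le_sum _ 0).trans h1.le) ((sum_slice_le_sum _ 0).trans h2.le) (by omega)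

/-- **Correctness of the reduction from Partition to NumberDDA with `k = 2`.** -/
theorem partition_reduction (n B : ℕ) (a : Fin n → ℕ)
    (hpos : ∀ i, 0 < a i) (hlt : ∀ i, a i < B) (hsum : ∑ i, a i = 2 * B) :
    (∃ I : Finset (Fin n), ∑ i ∈ I, a i = B) ↔
    (∃ σ' : Fin n × Fin 5 → ℕ × ℕ,
      (∀ p : Fin n × Fin 5,
        (partitionSeq n B a p).1 ≤ (σ' p).1 ∧ (partitionSeq n B a p).2 ≤ (σ' p).2) ∧
      (∑ p : Fin n × Fin 5, ((σ' p).1 - (partitionSeq n B a p).1)) = B ∧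
      (∑ p : Fin n × Fin 5, ((σ' p).2 - (partitionSeq n B a p).2)) = B ∧
      (∀ p : Fin n × Fin 5,
        2 ≤ (Finset.univ.filter fun q : Fin n × Fin 5 => σ' q = σ' p).card)) :=
  partition_reduction_general n B a hlt hsum
end
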